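/- arXiv:1511.05937 — 4 statements merged into one kernel-verified Lean document; each statement's English description precedes it below -/
import Mathlib

section
/- For any n ≥ 1, the number 2·(3n)!/((n+1)!·(2n+1)!) is a positive integer. -/
/-- Tutte's formula `2·(3n)!/((n+1)!·(2n+1)!)` is a positive integer for `n ≥ 1`. -/
theorem tutte_formula_is_positive_integer (n : ℕ) (hn : 1 ≤ n) :
    ((n + 1).factorial * (2 * n + 1).factorial) ∣ 2 * (3 * n).factorial ∧
      0 < 2 * (3 * n).factorial / ((n + 1).factorial * (2 * n + 1).factorial) := by
  obtain ⟨m, rfl⟩ : ∃ m, n = m + 1 := ⟨n - 1, (Nat.succ_pred_eq_of_pos hn).symm⟩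
  have key : ((m + 1 + 1).factorial * (2 * (m + 1) + 1).factorial) ∣
      2 * (3 * (m + 1)).factorial := by
    have e1 : 3 * (m + 1) = 3 * m + 3 := by ring
    have e2 : 2 * (m + 1) + 1 = 2 * m + 3 := by ring
    rw [e1, e2]
    have h1 := Nat.choose_mul_factorial_mul_factorial (show m + 1 ≤ 3 * m + 3 by omega)
    have h2 := Nat.choose_mul_factorial_mul_factorial (show m + 2 ≤ 3 * m + 3 by omega)
    have h3 := Nat.choose_mul_factorial_mul_factorial (show m ≤ 3 * m + 3 by omega)
    have s1 : 3 * m + 3 - (m + 1) = 2 * m + 2 := by omega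
    have s2 : 3 * m + 3 - (m + 2) = 2 * m + 1 := by omega
    have s3 : 3 * m + 3 - m = 2 * m + 3 := by omega
    rw [s1] at h1; rw [s2] at h2; rw [s3] at h3
    -- pass to ℤ
    rw [← Int.natCast_dvd_natCast]
    push_cast
    refine ⟨2 * ((3 * m + 3).choose (m + 1) : ℤ) + ((3 * m + 3).choose (m + 2) : ℤ)
      - 8 * ((3 * m + 3).choose m : ℤ), ?_⟩
    have h1' : ((3 * m + 3).choose (m + 1) : ℤ) * (m + 1).factorial * (2 * m + 2).factorial
        = (3 * m + 3).factorial := by exact_mod_cast congrArg (Nat.cast : ℕ → ℤ) h1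
    have h2' : ((3 * m + 3).choose (m + 2) : ℤ) * (m + 2).factorial * (2 * m + 1).factorial
        = (3 * m + 3).factorial := by exact_mod_cast congrArg (Nat.cast : ℕ → ℤ) h2
    have h3' : ((3 * m + 3).choose m : ℤ) * m.factorial * (2 * m + 3).factorial
        = (3 * m + 3).factorial := by exact_mod_cast congrArg (Nat.cast : ℕ → ℤ) h3
    have f1 : ((m + 2).factorial : ℤ) = (m + 2) * (m + 1).factorial := by
      exact_mod_cast congrArg (Nat.cast : ℕ → ℤ) (Nat.factorial_succ (m + 1))
    have f2 : ((m + 1).factorial : ℤ) = (m + 1) * m.factorial := by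
      exact_mod_cast congrArg (Nat.cast : ℕ → ℤ) (Nat.factorial_succ m)
    have f3 : ((2 * m + 3).factorial : ℤ) = (2 * m + 3) * (2 * m + 2).factorial := by
      have := Nat.factorial_succ (2 * m + 2)
      exact_mod_cast congrArg (Nat.cast : ℕ → ℤ) this
    have f4 : ((2 * m + 2).factorial : ℤ) = (2 * m + 2) * (2 * m + 1).factorial := by
      have := Nat.factorial_succ (2 * m + 1)
      exact_mod_cast congrArg (Nat.cast : ℕ → ℤ) this
    simp only [show m + 1 + 1 = m + 2 from rfl] at h1' h2' h3' ⊢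
    simp only [f1, f2, f3, f4] at h1' h2' h3' ⊢
    linear_combination (-(2 * ((m : ℤ) + 2) * (2 * m + 3))) * h1'
      - ((2 * (m : ℤ) + 2) * (2 * m + 3)) * h2'
      + (8 * ((m : ℤ) + 1) * (m + 2)) * h3'
  refine ⟨key, ?_⟩
  have hpos : 0 < 2 * (3 * (m + 1)).factorial := by positivity
  exact Nat.div_pos (Nat.le_of_dvd hpos key) (by positivity)
end

section
/- For two Dyck paths P and Q of size n, P ≤ Q in the Tamari lattice if and only if D_P(i) ≤ D_Q(i) for all 1 ≤ i ≤ n, where D_A(i) is the distance (number of intermediate letters plus 1) from the i-th up step of A to its matching down step. -/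
/-- A Dyck word: `true` is an up step `u`, `false` is a down step `d`. -/
def IsDyck (w : List Bool) : Prop :=
  w.count true = w.count false ∧ ∀ k, (w.take k).count false ≤ (w.take k).count true

/-- Position (0-based index) of the `i`-th (1-based) up step of `w`. -/
noncomputable def upPos (w : List Bool) (i : ℕ) : ℕ :=
  sInf {j | w.getD j false = true ∧ (w.take (j + 1)).count true = i}

/-- Position of the down step matching the up step at position `k`:
the first later down step such that the letters strictly in between form a Dyck word. -/
noncomputable def matchIdx (w : List Bool) (k : ℕ) : ℕ :=
  sInf {m | k < m ∧ w.getD m true = false ∧ IsDyck ((w.drop (k + 1)).take (m - (k + 1)))}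

/-- The distance function `D_w(i)`: number of letters between the `i`-th up step and its
matching down step, plus one. -/
noncomputable def distFn (w : List Bool) (i : ℕ) : ℕ :=
  matchIdx w (upPos w i) - upPos w i

/-- One rotation step of the Tamari order on Dyck words: a factor `d · B` (with `B` a
nonempty Dyck word) is replaced by `B · d`. -/
def TamariStep (P Q : List Bool) : Prop :=
  ∃ A B C : List Bool, IsDyck B ∧ B ≠ [] ∧
    P = A ++ false :: (B ++ C) ∧ Q = A ++ (B ++ false :: C)

/-- The Tamari order on Dyck words: reflexive-transitive closure of rotation steps. -/
def TamariLe : List Bool → List Bool → Prop := Relation.ReflTransGen TamariStep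

/-!
Everything is read off the height function of a word. The up step at position `k` is matched
with the first `m > k` after which the height is back to its value before `k`, and
`D(i) = 2 * (e(i) - i) + 1`, where `e(i)` is the index of the last up step enclosed by the `i`-th
one, so comparing distances amounts to comparing `e`.

A rotation `A d B C ↦ A B d C` carries each matched pair to a matched pair around the same up
steps; only the pair closed by the moved `d` grows, by `|B|`. Hence distances increase along the
Tamari order.

Conversely, let `D_P ≤ D_Q` with `D_P ≠ D_Q`, and among the `i` with `D_P(i) < D_Q(i)` take the
one whose match in `P` is rightmost. That match is followed by an up step `j = e_P(i) + 1`: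
otherwise the next letter closes an up step enclosing the `i`-th one, which is a candidate with a
later match. Rotating the match of `i` past the factor opened by `j` raises `e_P(i)` to `e_P(j)`,
and `e_P(j) ≤ e_Q(j) ≤ e_Q(i)` because `j` is enclosed by `i` in `Q`. This strictly increases
`∑ D_P` while keeping `D_P ≤ D_Q`, and once `D_P = D_Q` we have `P = Q`: at the first position
where two words differ, the down step of one would be closed by an up step of the common prefix,
and equal distances force the other word to close it there as well.
-/

namespace Tamari

def ups (w : List Bool) (j : ℕ) : ℕ := (w.take j).count true

def height (w : List Bool) (j : ℕ) : ℤ := (w.take j).count true - (w.take j).count false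

section Height

variable {w : List Bool} {j k : ℕ}

@[simp] lemma height_zero (w : List Bool) : height w 0 = 0 := by simp [height]

lemma height_succ_of_getElem?_eq {b : Bool} (h : w[k]? = some b) :
    height w (k + 1) = height w k + if b then 1 else -1 := by
  simp only [height, List.take_add_one, h, Option.toList_some, List.count_append,
    List.count_singleton]
  cases b <;> grind

lemma height_of_length_le (h : w.length ≤ j) : height w j = height w w.length := by
  rw [height, height, List.take_of_length_le h, List.take_length]

lemma height_succ_of_length_le (h : w.length ≤ k) : height w (k + 1) = height w k := by
  rw [height_of_length_le h, height_of_length_le (by omega)]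

lemma getElem?_eq_true_iff : w[k]? = some true ↔ height w (k + 1) = height w k + 1 := by
  rcases h : w[k]? with _ | b
  · rw [height_succ_of_length_le (List.getElem?_eq_none_iff.mp h)]; simp
  · rw [height_succ_of_getElem?_eq h]; cases b <;> simp

lemma getElem?_eq_false_iff : w[k]? = some false ↔ height w (k + 1) = height w k - 1 := by
  rcases h : w[k]? with _ | b
  · rw [height_succ_of_length_le (List.getElem?_eq_none_iff.mp h)]; grind
  · rw [height_succ_of_getElem?_eq h]; cases b <;> grind

lemma height_succ_le (w : List Bool) (k : ℕ) : height w (k + 1) ≤ height w k + 1 := by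
  rcases h : w[k]? with _ | b
  · rw [height_succ_of_length_le (List.getElem?_eq_none_iff.mp h)]; omega
  · rw [height_succ_of_getElem?_eq h]; split <;> omega

lemma height_le_height_succ (w : List Bool) (k : ℕ) : height w k ≤ height w (k + 1) + 1 := by
  rcases h : w[k]? with _ | b
  · rw [height_succ_of_length_le (List.getElem?_eq_none_iff.mp h)]; omega
  · rw [height_succ_of_getElem?_eq h]; split <;> omega

lemma isDyck_iff_height : IsDyck w ↔ (∀ j, 0 ≤ height w j) ∧ height w w.length = 0 := by
  simp only [IsDyck, height, sub_nonneg, sub_eq_zero, Nat.cast_le, Nat.cast_inj,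
    List.take_length]
  exact ⟨fun ⟨h1, h2⟩ => ⟨h2, h1⟩, fun ⟨h1, h2⟩ => ⟨h2, h1⟩⟩

lemma _root_.IsDyck.height_nonneg (hw : IsDyck w) (j : ℕ) : 0 ≤ height w j :=
  (isDyck_iff_height.mp hw).1 j

lemma _root_.IsDyck.height_of_length_le (hw : IsDyck w) (h : w.length ≤ j) : height w j = 0 := by
  rw [Tamari.height_of_length_le h, (isDyck_iff_height.mp hw).2]

lemma height_drop_take (w : List Bool) (a n j : ℕ) :
    height ((w.drop a).take n) j = height w (a + min j n) - height w a := by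
  simp only [height, List.take_take, List.take_add, List.count_append]
  push_cast; ring

lemma isDyck_drop_take_iff {a n : ℕ} (h : a + n ≤ w.length) :
    IsDyck ((w.drop a).take n) ↔
      (∀ t, a ≤ t → t ≤ a + n → height w a ≤ height w t) ∧
        height w (a + n) = height w a := by
  have hlen : ((w.drop a).take n).length = n := by
    simp only [List.length_take, List.length_drop]; omega
  simp only [isDyck_iff_height, height_drop_take, hlen, min_self, sub_nonneg, sub_eq_zero]
  refine and_congr_left fun _ => ⟨fun h t ht1 ht2 => ?_, fun h j => h _ (by omega) (by omega)⟩
  simpa [show min (t - a) n = t - a by omega, show a + (t - a) = t by omega] using h (t - a)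

lemma height_append (X Y : List Bool) (j : ℕ) :
    height (X ++ Y) j = height X j + height Y (j - X.length) := by
  simp only [height, List.take_append, List.count_append]; push_cast; ring

lemma height_cons_false (Y : List Bool) (hj : 0 < j) :
    height (false :: Y) j = height Y (j - 1) - 1 := by
  obtain ⟨j, rfl⟩ := Nat.exists_eq_add_one_of_ne_zero hj.ne'
  simp only [height, List.take_succ_cons, List.count_cons]
  grind

lemma ups_mono (w : List Bool) : Monotone (ups w) := fun _ _ h =>
  ((List.take_prefix_take_left h).sublist).count_le _

lemma ups_le_count (w : List Bool) (j : ℕ) : ups w j ≤ w.count true :=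
  (List.take_sublist _ _).count_le _

lemma ups_succ_of_getElem?_eq_true (h : w[k]? = some true) : ups w (k + 1) = ups w k + 1 := by
  simp [ups, List.take_add_one, h]

lemma ups_succ_of_getElem?_ne_true (h : w[k]? ≠ some true) : ups w (k + 1) = ups w k := by
  rcases hk : w[k]? with _ | b
  · simp [ups, List.take_add_one, hk]
  · cases b
    · simp [ups, List.take_add_one, hk]
    · exact absurd hk h

lemma two_mul_ups (h : j ≤ w.length) : 2 * (ups w j : ℤ) = j + height w j := by
  have := List.count_true_add_count_false (w.take j)
  simp only [ups, height, List.length_take, min_eq_left h] at this ⊢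
  omega

lemma ups_eq_of_add_height_eq {w w' : List Bool} {j j' : ℕ} (hj : j ≤ w.length)
    (hj' : j' ≤ w'.length) (h : (j : ℤ) + height w j = j' + height w' j') :
    ups w j = ups w' j' := by
  have := two_mul_ups hj
  have := two_mul_ups hj'
  omega

lemma _root_.IsDyck.length_eq {w : List Bool} (hw : IsDyck w) : w.length = 2 * w.count true := by
  have := List.count_true_add_count_false w
  have := hw.1
  omega

end Height

lemma getD_eq_iff {w : List Bool} {j : ℕ} {b d : Bool} (hbd : b ≠ d) :
    w.getD j d = b ↔ w[j]? = some b := by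
  rw [List.getD_eq_getElem?_getD]
  rcases w[j]? with _ | c <;> simp [Ne.symm hbd]

/-- After reading the letter at `m`, the path is back for the first time at its height before
position `k`. -/
structure IsMatch (w : List Bool) (k m : ℕ) : Prop where
  lt : k < m
  height_succ : height w (m + 1) = height w k
  height_lt : ∀ t, k < t → t ≤ m → height w k < height w t

namespace IsMatch

variable {w : List Bool} {k m : ℕ}

lemma getElem?_left (h : IsMatch w k m) : w[k]? = some true := by
  have := h.height_lt (k + 1) (by omega) h.lt
  have := height_succ_le w k
  rw [getElem?_eq_true_iff]; omega

lemma height_right (h : IsMatch w k m) : height w m = height w k + 1 := by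
  have := h.height_lt m h.lt le_rfl
  have := height_le_height_succ w m
  have := h.height_succ
  omega

lemma getElem?_right (h : IsMatch w k m) : w[m]? = some false := by
  have := h.height_right
  have := h.height_succ
  rw [getElem?_eq_false_iff]; omega

lemma lt_length (h : IsMatch w k m) : m < w.length :=
  (List.getElem?_eq_some_iff.mp h.getElem?_right).1

lemma le_of_height_le (h : IsMatch w k m) {m' : ℕ} (hkm' : k ≤ m')
    (hm' : height w (m' + 1) ≤ height w k) : m ≤ m' := by
  by_contra hlt
  have := h.height_lt (m' + 1) (by omega) (by omega)
  omega

lemma right_unique {m' : ℕ} (h : IsMatch w k m) (h' : IsMatch w k m') : m = m' :=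
  le_antisymm (h.le_of_height_le h'.lt.le h'.height_succ.le)
    (h'.le_of_height_le h.lt.le h.height_succ.le)

lemma left_unique {k' : ℕ} (h : IsMatch w k m) (h' : IsMatch w k' m) : k = k' := by
  have := h.height_succ
  have := h'.height_succ
  by_contra hne
  rcases Nat.lt_or_gt_of_ne hne with hlt | hlt
  · have := h.height_lt k' hlt h'.lt.le; omega
  · have := h'.height_lt k hlt h.lt.le; omega

lemma right_lt_of_lt_of_lt {k' m' : ℕ} (h : IsMatch w k m) (h' : IsMatch w k' m') (hk : k < k')
    (hk' : k' < m) : m' < m := by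
  have := h.height_lt k' hk hk'.le
  have hle := h'.le_of_height_le hk'.le (by rw [h.height_succ]; exact this.le)
  rcases hle.lt_or_eq with hlt | rfl
  · exact hlt
  · exact absurd (h.left_unique h') hk.ne

lemma lt_of_isMatch_succ {k' : ℕ} (h : IsMatch w k m) (h' : IsMatch w k' (m + 1)) :
    k' < k := by
  rcases lt_trichotomy k' k with hlt | rfl | hlt
  · exact hlt
  · have := h.right_unique h'; omega
  · have hk'm : k' < m := by
      refine lt_of_le_of_ne (by have := h'.lt; omega) fun hk'm => ?_
      have := h.getElem?_right
      rw [← hk'm, h'.getElem?_left] at this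
      simp at this
    have := h.right_lt_of_lt_of_lt h' hlt hk'm
    omega

lemma of_height_eq {w w' : List Bool} {k m d : ℕ} {c : ℤ} (h : IsMatch w (k + d) (m + d))
    (hh : ∀ t, k ≤ t → t ≤ m + 1 → height w' t = height w (t + d) + c) :
    IsMatch w' k m := by
  obtain ⟨hkm, hret, habove⟩ := h
  refine ⟨by omega, ?_, fun t ht1 ht2 => ?_⟩
  · rw [hh _ (by omega) le_rfl, hh _ le_rfl (by omega), show m + 1 + d = m + d + 1 by omega, hret]
  · rw [hh _ le_rfl (by omega), hh _ (by omega) (by omega)]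
    have := habove (t + d) (by omega) (by omega)
    omega

lemma matchIdx_eq (h : IsMatch w k m) : matchIdx w k = m := by
  have hm := h.lt_length
  have hkm := h.lt
  have hmem : m ∈ {m | k < m ∧ w.getD m true = false ∧
      IsDyck ((w.drop (k + 1)).take (m - (k + 1)))} := by
    refine ⟨h.lt, (getD_eq_iff (by decide)).mpr h.getElem?_right, ?_⟩
    have hup := getElem?_eq_true_iff.mp h.getElem?_left
    rw [isDyck_drop_take_iff (by omega), show k + 1 + (m - (k + 1)) = m by omega, h.height_right]
    exact ⟨fun t ht1 ht2 => by have := h.height_lt t (by omega) ht2; omega, hup.symm⟩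
  refine le_antisymm (Nat.sInf_le hmem) (le_csInf ⟨m, hmem⟩ ?_)
  rintro m' ⟨hkm', hd, hdyck⟩
  rw [getD_eq_iff (by decide), getElem?_eq_false_iff] at hd
  have hm' : m' < w.length := by
    by_contra hge
    rw [height_succ_of_length_le (by omega)] at hd; omega
  rw [isDyck_drop_take_iff (by omega), show k + 1 + (m' - (k + 1)) = m' by omega,
    getElem?_eq_true_iff.mp h.getElem?_left] at hdyck
  exact h.le_of_height_le hkm'.le (by omega)

lemma isDyck_drop_take (h : IsMatch w k m) : IsDyck ((w.drop k).take (m + 1 - k)) := by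
  have hm := h.lt_length
  have hkm := h.lt
  rw [isDyck_drop_take_iff (by omega), show k + (m + 1 - k) = m + 1 by omega]
  refine ⟨fun t ht1 ht2 => ?_, h.height_succ⟩
  rcases ht1.lt_or_eq with ht1 | rfl
  · rcases ht2.lt_or_eq with ht2 | rfl
    · exact (h.height_lt t ht1 (by omega)).le
    · exact h.height_succ.ge
  · exact le_rfl

end IsMatch

section Matching

variable {w : List Bool} {i j k m : ℕ}

lemma exists_isMatch_of_up (hw : IsDyck w) (hk : w[k]? = some true) : ∃ m, IsMatch w k m := by
  classical
  have hlen := (List.getElem?_eq_some_iff.mp hk).1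
  have hex : ∃ m, k < m ∧ height w (m + 1) ≤ height w k :=
    ⟨k + w.length, by omega,
      by rw [hw.height_of_length_le (by omega)]; exact hw.height_nonneg k⟩
  obtain ⟨hkm, hret⟩ := Nat.find_spec hex
  have hup := getElem?_eq_true_iff.mp hk
  have habove : ∀ t, k < t → t ≤ Nat.find hex → height w k < height w t := by
    intro t ht1 ht2
    rcases (show k + 1 ≤ t from ht1).lt_or_eq with ht | rfl
    · have := Nat.find_min hex (show t - 1 < Nat.find hex by omega)
      rw [show t - 1 + 1 = t by omega, not_and, not_le] at this
      exact this (by omega)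
    · omega
  refine ⟨Nat.find hex, hkm, le_antisymm hret ?_, habove⟩
  have := habove _ hkm le_rfl
  have := height_le_height_succ w (Nat.find hex)
  omega

lemma exists_isMatch_of_down (hw : IsDyck w) (hm : w[m]? = some false) : ∃ k, IsMatch w k m := by
  classical
  have hdown := getElem?_eq_false_iff.mp hm
  set k := Nat.findGreatest (fun t => height w t ≤ height w (m + 1)) m
  have hk : height w k ≤ height w (m + 1) :=
    Nat.findGreatest_spec (P := fun t => height w t ≤ height w (m + 1)) (Nat.zero_le m)
      (by simpa using hw.height_nonneg (m + 1))
  have habove : ∀ t, k < t → t ≤ m → height w (m + 1) < height w t :=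
    fun t h1 h2 => lt_of_not_ge (Nat.findGreatest_is_greatest h1 h2)
  have hkm : k < m := by
    have hkm : k ≤ m := Nat.findGreatest_le m
    rcases hkm.lt_or_eq with h | h
    · exact h
    · rw [h] at hk; omega
  have := habove (k + 1) (by omega) hkm
  have := height_succ_le w k
  have hk_eq : height w (m + 1) = height w k := by omega
  exact ⟨k, hkm, hk_eq, fun t h1 h2 => hk_eq ▸ habove t h1 h2⟩

lemma isMatch_matchIdx (hw : IsDyck w) (hk : w[k]? = some true) : IsMatch w k (matchIdx w k) := by
  obtain ⟨m, h⟩ := exists_isMatch_of_up hw hk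
  rwa [h.matchIdx_eq]

lemma upPos_ups_succ (hk : w[k]? = some true) : upPos w (ups w (k + 1)) = k := by
  have hmem : k ∈ {j | w.getD j false = true ∧ (w.take (j + 1)).count true = ups w (k + 1)} :=
    ⟨(getD_eq_iff (by decide)).mpr hk, rfl⟩
  refine le_antisymm (Nat.sInf_le hmem) (le_csInf ⟨k, hmem⟩ ?_)
  rintro j ⟨hj, hjk⟩
  rw [getD_eq_iff (by decide)] at hj
  by_contra hlt
  have := ups_mono w (show j + 1 ≤ k by omega)
  have := ups_succ_of_getElem?_eq_true hk
  have : ups w (j + 1) = ups w (k + 1) := hjk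
  omega

lemma exists_up_of_le_count (h1 : 1 ≤ i) (h2 : i ≤ w.count true) :
    ∃ k, w[k]? = some true ∧ ups w (k + 1) = i := by
  classical
  have hex : ∃ t, i ≤ ups w t := ⟨w.length, by simpa [ups] using h2⟩
  have ht := Nat.find_spec hex
  have ht0 : Nat.find hex ≠ 0 := fun h0 => by
    rw [h0] at ht; simp only [ups, List.take_zero, List.count_nil] at ht; omega
  obtain ⟨k, hk⟩ := Nat.exists_eq_add_one_of_ne_zero ht0
  have hlt : ups w k < i := lt_of_not_ge (Nat.find_min hex (by omega))
  rw [hk] at ht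
  by_cases hup : w[k]? = some true
  · exact ⟨k, hup, by rw [ups_succ_of_getElem?_eq_true hup] at ht ⊢; omega⟩
  · rw [ups_succ_of_getElem?_ne_true hup] at ht; omega

lemma getElem?_upPos (h1 : 1 ≤ i) (h2 : i ≤ w.count true) : w[upPos w i]? = some true := by
  obtain ⟨k, hk, rfl⟩ := exists_up_of_le_count h1 h2
  rwa [upPos_ups_succ hk]

lemma ups_upPos_succ (h1 : 1 ≤ i) (h2 : i ≤ w.count true) : ups w (upPos w i + 1) = i := by
  obtain ⟨k, hk, rfl⟩ := exists_up_of_le_count h1 h2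
  rw [upPos_ups_succ hk]

lemma upPos_lt_upPos (h1 : 1 ≤ i) (hij : i < j) (h2 : j ≤ w.count true) :
    upPos w i < upPos w j := by
  have hi := ups_upPos_succ h1 (hij.le.trans h2)
  have hj := ups_upPos_succ (h1.trans hij.le) h2
  have := (ups_mono w).reflect_lt (show ups w (upPos w i + 1) < ups w (upPos w j + 1) by omega)
  omega

end Matching

/-- The index of the last up step enclosed by the `i`-th one. -/
noncomputable def upsBeforeMatch (w : List Bool) (i : ℕ) : ℕ := ups w (matchIdx w (upPos w i))

section Distance

variable {w : List Bool} {i j k m : ℕ}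

lemma isMatch_upPos (hw : IsDyck w) (h1 : 1 ≤ i) (h2 : i ≤ w.count true) :
    IsMatch w (upPos w i) (matchIdx w (upPos w i)) :=
  isMatch_matchIdx hw (getElem?_upPos h1 h2)

lemma sub_eq_two_mul_ups_sub (hkm : k < m) (hm : m ≤ w.length)
    (hh : height w m = height w (k + 1)) : m - k = 2 * (ups w m - ups w (k + 1)) + 1 := by
  have := two_mul_ups hm
  have := two_mul_ups (show k + 1 ≤ w.length by omega)
  have := ups_mono w (show k + 1 ≤ m by omega)
  omega

lemma distFn_eq (hw : IsDyck w) (h1 : 1 ≤ i) (h2 : i ≤ w.count true) :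
    distFn w i = 2 * (upsBeforeMatch w i - i) + 1 := by
  have h := isMatch_upPos hw h1 h2
  have := sub_eq_two_mul_ups_sub h.lt h.lt_length.le
    (by rw [h.height_right, getElem?_eq_true_iff.mp h.getElem?_left])
  rwa [ups_upPos_succ h1 h2] at this

lemma le_upsBeforeMatch (hw : IsDyck w) (h1 : 1 ≤ i) (h2 : i ≤ w.count true) :
    i ≤ upsBeforeMatch w i := by
  have := ups_mono w (isMatch_upPos hw h1 h2).lt
  rwa [ups_upPos_succ h1 h2] at this

lemma upsBeforeMatch_le_count (w : List Bool) (i : ℕ) : upsBeforeMatch w i ≤ w.count true :=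
  ups_le_count _ _

lemma distFn_le_distFn_iff {P Q : List Bool} (hP : IsDyck P) (hQ : IsDyck Q) (h1 : 1 ≤ i)
    (hPi : i ≤ P.count true) (hQi : i ≤ Q.count true) :
    distFn P i ≤ distFn Q i ↔ upsBeforeMatch P i ≤ upsBeforeMatch Q i := by
  have := le_upsBeforeMatch hP h1 hPi
  have := le_upsBeforeMatch hQ h1 hQi
  rw [distFn_eq hP h1 hPi, distFn_eq hQ h1 hQi]
  omega

lemma upsBeforeMatch_le_of_lt_of_le (hw : IsDyck w) (h1 : 1 ≤ i) (hij : i < j)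
    (hj : j ≤ upsBeforeMatch w i) : upsBeforeMatch w j ≤ upsBeforeMatch w i := by
  have hjc : j ≤ w.count true := hj.trans (upsBeforeMatch_le_count w i)
  have hi := isMatch_upPos hw h1 (hij.le.trans hjc)
  have hkj : upPos w j < matchIdx w (upPos w i) := by
    by_contra hle
    have := ups_mono w (not_lt.mp hle)
    have := ups_succ_of_getElem?_eq_true (getElem?_upPos (h1.trans hij.le) hjc)
    have := ups_upPos_succ (h1.trans hij.le) hjc
    rw [upsBeforeMatch] at hj
    omega
  exact ups_mono w (hi.right_lt_of_lt_of_lt (isMatch_upPos hw (h1.trans hij.le) hjc)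
    (upPos_lt_upPos h1 hij hjc) hkj).le

end Distance

section Rotation

variable {A B C : List Bool} {k m t : ℕ}

lemma height_rotate_of_le (ht : t ≤ A.length) :
    height (A ++ (B ++ false :: C)) t = height (A ++ false :: (B ++ C)) t := by
  simp [height_append, Nat.sub_eq_zero_of_le ht]

lemma height_rotate_of_mem (ht1 : A.length ≤ t) (ht2 : t ≤ A.length + B.length) :
    height (A ++ (B ++ false :: C)) t = height (A ++ false :: (B ++ C)) (t + 1) + 1 := by
  rw [height_append, height_append, height_append, height_cons_false (B ++ C) (by omega),
    height_append, Tamari.height_of_length_le ht1,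
    Tamari.height_of_length_le (show A.length ≤ t + 1 by omega),
    show t + 1 - A.length - 1 = t - A.length by omega,
    Nat.sub_eq_zero_of_le (show t - A.length ≤ B.length by omega), height_zero, height_zero]
  ring

lemma height_rotate_of_lt (hB : IsDyck B) (ht : A.length + B.length < t) :
    height (A ++ (B ++ false :: C)) t = height (A ++ false :: (B ++ C)) t := by
  rw [height_append, height_append, height_append, height_cons_false _ (by omega),
    height_cons_false _ (by omega), height_append, hB.height_of_length_le (by omega),
    hB.height_of_length_le (by omega), show t - A.length - 1 - B.length =
      t - A.length - B.length - 1 by omega]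
  ring

lemma height_block_eq (ht1 : A.length < t) (ht2 : t ≤ A.length + B.length + 1) :
    height (A ++ false :: (B ++ C)) t = height A A.length - 1 + height B (t - A.length - 1) := by
  rw [height_append, height_cons_false _ (by omega), height_append,
    Tamari.height_of_length_le ht1.le,
    Nat.sub_eq_zero_of_le (show t - A.length - 1 ≤ B.length by omega), height_zero]
  ring

lemma height_block_ge (hB : IsDyck B) (ht1 : A.length < t)
    (ht2 : t ≤ A.length + B.length + 1) :
    height (A ++ false :: (B ++ C)) (A.length + 1) ≤ height (A ++ false :: (B ++ C)) t := by
  rw [height_block_eq ht1 ht2, height_block_eq (by omega) (by omega)]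
  simpa using hB.height_nonneg _

lemma height_block_end (hB : IsDyck B) :
    height (A ++ false :: (B ++ C)) (A.length + B.length + 1) =
      height (A ++ false :: (B ++ C)) (A.length + 1) := by
  rw [height_block_eq (by omega) le_rfl, height_block_eq (by omega) (by omega),
    show A.length + B.length + 1 - A.length - 1 = B.length by omega,
    hB.height_of_length_le le_rfl]
  simp

lemma IsMatch.rotate_of_lt (h : IsMatch (A ++ false :: (B ++ C)) k m) (hm : m < A.length) :
    IsMatch (A ++ (B ++ false :: C)) k m :=
  h.of_height_eq (d := 0) (c := 0) fun _ _ ht => by simpa using height_rotate_of_le (by omega)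

lemma IsMatch.rotate_of_gt (hB : IsDyck B) (h : IsMatch (A ++ false :: (B ++ C)) k m)
    (hk : A.length + B.length < k) : IsMatch (A ++ (B ++ false :: C)) k m :=
  h.of_height_eq (d := 0) (c := 0) fun _ ht _ => by simpa using height_rotate_of_lt hB (by omega)

lemma IsMatch.rotate_of_mem (hB : IsDyck B) (h : IsMatch (A ++ false :: (B ++ C)) k m)
    (hk1 : A.length < k) (hk2 : k ≤ A.length + B.length) :
    IsMatch (A ++ (B ++ false :: C)) (k - 1) (m - 1) := by
  have hm : m ≤ A.length + B.length := h.le_of_height_le (m' := A.length + B.length) (by omega)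
    (by rw [height_block_end hB]; exact height_block_ge hB hk1 (by omega))
  have hkm := h.lt
  refine IsMatch.of_height_eq (d := 1) (c := 1) ?_ fun t _ _ =>
    height_rotate_of_mem (by omega) (by omega)
  rwa [Nat.sub_add_cancel (by omega), Nat.sub_add_cancel (by omega)]

lemma IsMatch.rotate_of_eq (hB : IsDyck B) (h : IsMatch (A ++ false :: (B ++ C)) k A.length) :
    IsMatch (A ++ (B ++ false :: C)) k (A.length + B.length) := by
  obtain ⟨hka, hret, habove⟩ := h
  refine ⟨by omega, ?_, fun t ht1 ht2 => ?_⟩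
  · rw [height_rotate_of_lt hB (by omega), height_rotate_of_le hka.le, height_block_end hB,
      hret]
  · rw [height_rotate_of_le hka.le]
    rcases Nat.lt_or_ge t A.length with hta | hta
    · rw [height_rotate_of_le hta.le]; exact habove t ht1 hta.le
    · rw [height_rotate_of_mem hta ht2]
      have := height_block_ge (A := A) (C := C) hB (t := t + 1) (by omega) (by omega)
      omega

lemma IsMatch.rotate_of_lt_of_gt (hB : IsDyck B) (h : IsMatch (A ++ false :: (B ++ C)) k m)
    (hk : k < A.length) (hm : A.length < m) : IsMatch (A ++ (B ++ false :: C)) k m := by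
  obtain ⟨hkm, hret, habove⟩ := h
  have hm' : A.length + B.length < m := by
    by_contra hle
    have := habove (A.length + 1) (by omega) (by omega)
    have := height_block_ge (A := A) (C := C) hB (t := m + 1) (by omega) (by omega)
    omega
  refine ⟨hkm, ?_, fun t ht1 ht2 => ?_⟩
  · rw [height_rotate_of_lt hB (by omega), height_rotate_of_le hk.le, hret]
  · rw [height_rotate_of_le hk.le]
    rcases Nat.lt_or_ge t A.length with hta | hta
    · rw [height_rotate_of_le hta.le]; exact habove t ht1 (by omega)
    rcases Nat.lt_or_ge (A.length + B.length) t with htb | htb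
    · rw [height_rotate_of_lt hB htb]; exact habove t ht1 ht2
    · rw [height_rotate_of_mem hta htb]
      have := habove (t + 1) (by omega) (by omega)
      omega

lemma IsMatch.exists_rotate (hB : IsDyck B) (h : IsMatch (A ++ false :: (B ++ C)) k m) :
    ∃ k' m', IsMatch (A ++ (B ++ false :: C)) k' m' ∧
      ups (A ++ (B ++ false :: C)) (k' + 1) = ups (A ++ false :: (B ++ C)) (k + 1) ∧
      m' - k' = m - k + if m = A.length then B.length else 0 := by
  have hlen : (A ++ (B ++ false :: C)).length = (A ++ false :: (B ++ C)).length := by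
    simp only [List.length_append, List.length_cons]; omega
  have hkm := h.lt
  have hm := h.lt_length
  have hka : k ≠ A.length := fun hka => by
    have := h.getElem?_left; simp [hka] at this
  rcases Nat.lt_or_ge k A.length with hk | hk
  · have hups : ups (A ++ (B ++ false :: C)) (k + 1) = ups (A ++ false :: (B ++ C)) (k + 1) :=
      ups_eq_of_add_height_eq (by omega) (by omega) (by rw [height_rotate_of_le hk])
    rcases lt_trichotomy m A.length with hma | rfl | hma
    · exact ⟨k, m, h.rotate_of_lt hma, hups, by rw [if_neg hma.ne]; rfl⟩
    · exact ⟨k, A.length + B.length, h.rotate_of_eq hB, hups, by rw [if_pos rfl]; omega⟩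
    · exact ⟨k, m, h.rotate_of_lt_of_gt hB hk hma, hups, by rw [if_neg hma.ne']; rfl⟩
  rcases Nat.lt_or_ge (A.length + B.length) k with hkb | hkb
  · refine ⟨k, m, h.rotate_of_gt hB hkb, ups_eq_of_add_height_eq (by omega) (by omega)
      (by rw [height_rotate_of_lt hB (by omega)]), by rw [if_neg (by omega)]; rfl⟩
  · refine ⟨k - 1, m - 1, h.rotate_of_mem hB (by omega) hkb,
      ups_eq_of_add_height_eq (by omega) (by omega) ?_, by rw [if_neg (by omega)]; omega⟩
    rw [Nat.sub_add_cancel (by omega), height_rotate_of_mem (by omega) hkb]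
    push_cast; ring

lemma isDyck_rotate (hB : IsDyck B) (hP : IsDyck (A ++ false :: (B ++ C))) :
    IsDyck (A ++ (B ++ false :: C)) := by
  rw [isDyck_iff_height]
  refine ⟨fun t => ?_, ?_⟩
  · rcases Nat.lt_or_ge t A.length with ht | ht
    · rw [height_rotate_of_le ht.le]; exact hP.height_nonneg t
    rcases Nat.lt_or_ge (A.length + B.length) t with htb | htb
    · rw [height_rotate_of_lt hB htb]; exact hP.height_nonneg t
    · rw [height_rotate_of_mem ht htb]; have := hP.height_nonneg (t + 1); omega
  · rw [height_rotate_of_lt hB (by simp), hP.height_of_length_le (by simp)]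

lemma count_rotate :
    (A ++ (B ++ false :: C)).count true = (A ++ false :: (B ++ C)).count true := by
  simp [List.count_append]

lemma distFn_rotate (hB : IsDyck B) (hP : IsDyck (A ++ false :: (B ++ C))) {i : ℕ} (h1 : 1 ≤ i)
    (h2 : i ≤ (A ++ false :: (B ++ C)).count true) :
    distFn (A ++ (B ++ false :: C)) i = distFn (A ++ false :: (B ++ C)) i +
      if matchIdx (A ++ false :: (B ++ C)) (upPos (A ++ false :: (B ++ C)) i) = A.length
      then B.length else 0 := by
  obtain ⟨k', m', h', hups, hdist⟩ := (isMatch_upPos hP h1 h2).exists_rotate hB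
  have hk' : upPos (A ++ (B ++ false :: C)) i = k' := by
    rw [← ups_upPos_succ h1 h2, ← hups, upPos_ups_succ h'.getElem?_left]
  rw [distFn, distFn, hk', h'.matchIdx_eq, hdist]

end Rotation

section Forward

variable {P Q : List Bool}

lemma _root_.TamariStep.isDyck (h : TamariStep P Q) (hP : IsDyck P) : IsDyck Q := by
  obtain ⟨A, B, C, hB, -, rfl, rfl⟩ := h
  exact isDyck_rotate hB hP

lemma _root_.TamariStep.count_eq (h : TamariStep P Q) : Q.count true = P.count true := by
  obtain ⟨A, B, C, -, -, rfl, rfl⟩ := h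
  exact count_rotate

lemma _root_.TamariStep.distFn_le (h : TamariStep P Q) (hP : IsDyck P) {i : ℕ} (h1 : 1 ≤ i)
    (h2 : i ≤ P.count true) : distFn P i ≤ distFn Q i := by
  obtain ⟨A, B, C, hB, -, rfl, rfl⟩ := h
  rw [distFn_rotate hB hP h1 h2]
  exact Nat.le_add_right _ _

lemma _root_.TamariStep.sum_distFn_lt (h : TamariStep P Q) (hP : IsDyck P) :
    ∑ i ∈ Finset.Icc 1 (P.count true), distFn P i <
      ∑ i ∈ Finset.Icc 1 (P.count true), distFn Q i := by
  have hle : ∀ i, 1 ≤ i → i ≤ P.count true → distFn P i ≤ distFn Q i :=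
    fun _ => h.distFn_le hP
  obtain ⟨A, B, C, hB, hBne, rfl, rfl⟩ := h
  obtain ⟨k, hk⟩ := exists_isMatch_of_down hP (m := A.length) (by simp)
  have hup := hk.getElem?_left
  have h1 : 1 ≤ ups (A ++ false :: (B ++ C)) (k + 1) := by
    rw [ups_succ_of_getElem?_eq_true hup]; omega
  have h2 := ups_le_count (A ++ false :: (B ++ C)) (k + 1)
  refine Finset.sum_lt_sum (fun i hi => hle i (Finset.mem_Icc.mp hi).1 (Finset.mem_Icc.mp hi).2)
    ⟨_, Finset.mem_Icc.mpr ⟨h1, h2⟩, ?_⟩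
  rw [distFn_rotate hB hP h1 h2, upPos_ups_succ hup, hk.matchIdx_eq, if_pos rfl]
  have := List.length_pos_iff.mpr hBne
  omega

lemma _root_.TamariLe.isDyck (h : TamariLe P Q) (hP : IsDyck P) : IsDyck Q := by
  induction h with
  | refl => exact hP
  | tail _ hstep ih => exact hstep.isDyck ih

lemma _root_.TamariLe.count_eq (h : TamariLe P Q) : Q.count true = P.count true := by
  induction h with
  | refl => rfl
  | tail _ hstep ih => exact hstep.count_eq.trans ih

lemma _root_.TamariLe.distFn_le (h : TamariLe P Q) (hP : IsDyck P) {i : ℕ} (h1 : 1 ≤ i)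
    (h2 : i ≤ P.count true) : distFn P i ≤ distFn Q i := by
  induction h with
  | refl => exact le_rfl
  | tail hPR hstep ih =>
    exact ih.trans (hstep.distFn_le (TamariLe.isDyck hPR hP) h1 (TamariLe.count_eq hPR ▸ h2))

end Forward

section Injectivity

variable {P Q : List Bool} {p : ℕ}

lemma getElem?_eq_false_of_take_eq (hQ : IsDyck Q) (hP : IsDyck P)
    (hd : ∀ i, 1 ≤ i → i ≤ P.count true → distFn P i = distFn Q i)
    (htake : P.take p = Q.take p) (hp : P[p]? = some false) : Q[p]? = some false := by
  obtain ⟨k, hk⟩ := exists_isMatch_of_down hP hp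
  have hkp := hk.lt
  have hupP := hk.getElem?_left
  have hupQ : Q[k]? = some true := by
    rw [← List.getElem?_take_of_lt hkp, ← htake, List.getElem?_take_of_lt hkp, hupP]
  have hups : ups Q (k + 1) = ups P (k + 1) := by
    have hpre : ∀ w : List Bool, w.take (k + 1) = (w.take p).take (k + 1) := fun w => by
      rw [List.take_take, min_eq_left (by omega)]
    rw [ups, ups, hpre Q, hpre P, htake]
  have h1 : 1 ≤ ups P (k + 1) := by rw [ups_succ_of_getElem?_eq_true hupP]; omega
  have hdist := hd _ h1 (ups_le_count P (k + 1))
  rw [distFn, distFn, upPos_ups_succ hupP, hk.matchIdx_eq, ← hups, upPos_ups_succ hupQ] at hdist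
  have hQm := isMatch_matchIdx hQ hupQ
  rw [show matchIdx Q k = p by have := hQm.lt; omega] at hQm
  exact hQm.getElem?_right

lemma eq_of_distFn_eq (hP : IsDyck P) (hQ : IsDyck Q) (hc : P.count true = Q.count true)
    (hd : ∀ i, 1 ≤ i → i ≤ P.count true → distFn P i = distFn Q i) : P = Q := by
  have hlen : P.length = Q.length := by rw [hP.length_eq, hQ.length_eq, hc]
  have hd' : ∀ i, 1 ≤ i → i ≤ Q.count true → distFn Q i = distFn P i :=
    fun i h1 h2 => (hd i h1 (hc ▸ h2)).symm
  have hnext : ∀ p, P.take p = Q.take p → P[p]? = Q[p]? := by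
    intro p htake
    rcases hPp : P[p]? with _ | _ | _
    · rw [List.getElem?_eq_none_iff] at hPp
      exact (List.getElem?_eq_none_iff.mpr (by omega)).symm
    · exact (getElem?_eq_false_of_take_eq hQ hP hd htake hPp).symm
    · rcases hQp : Q[p]? with _ | _ | _
      · rw [List.getElem?_eq_none_iff] at hQp
        have := (List.getElem?_eq_some_iff.mp hPp).1; omega
      · have := getElem?_eq_false_of_take_eq hP hQ hd' htake.symm hQp
        simp [hPp] at this
      · rfl
  have htake : ∀ p, P.take p = Q.take p := by
    intro p
    induction p with
    | zero => rfl
    | succ p ih => rw [List.take_add_one, List.take_add_one, ih, hnext p ih]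
  have := htake P.length
  rwa [List.take_of_length_le le_rfl, List.take_of_length_le hlen.ge] at this

end Injectivity

section Backward

variable {w P Q : List Bool} {i m m' : ℕ}

lemma exists_eq_append_false_cons (hm : w[m]? = some false) (hm' : IsMatch w (m + 1) m') :
    ∃ A B C, w = A ++ false :: (B ++ C) ∧ A.length = m ∧ B.length = m' - m ∧ IsDyck B := by
  have hlen := hm'.lt_length
  have hmm' := hm'.lt
  obtain ⟨hlt, hwm⟩ := List.getElem?_eq_some_iff.mp hm
  refine ⟨w.take m, (w.drop (m + 1)).take (m' - m), w.drop (m' + 1), ?_,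
    by simp only [List.length_take]; omega,
    by simp only [List.length_take, List.length_drop]; omega, ?_⟩
  · conv_lhs => rw [← List.take_append_drop m w, List.drop_eq_getElem_cons hlt, hwm,
      ← List.take_append_drop (m' - m) (w.drop (m + 1)), List.drop_drop,
      show m + 1 + (m' - m) = m' + 1 by omega]
  · have := hm'.isDyck_drop_take
    rwa [show m' + 1 - (m + 1) = m' - m by omega] at this

lemma getElem?_matchIdx_add_one (hP : IsDyck P) (hQ : IsDyck Q)
    (hc : P.count true = Q.count true)
    (hle : ∀ t, 1 ≤ t → t ≤ P.count true → upsBeforeMatch P t ≤ upsBeforeMatch Q t)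
    (h1 : 1 ≤ i) (h2 : i ≤ P.count true) (hlt : upsBeforeMatch P i < upsBeforeMatch Q i)
    (hmax : ∀ t, 1 ≤ t → t ≤ P.count true → upsBeforeMatch P t < upsBeforeMatch Q t →
      matchIdx P (upPos P t) ≤ matchIdx P (upPos P i)) :
    P[matchIdx P (upPos P i) + 1]? = some true := by
  have hm := isMatch_upPos hP h1 h2
  have hups : ups P (matchIdx P (upPos P i) + 1) = upsBeforeMatch P i :=
    ups_succ_of_getElem?_ne_true (by rw [hm.getElem?_right]; simp)
  have hQc := upsBeforeMatch_le_count Q i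
  rcases hnext : P[matchIdx P (upPos P i) + 1]? with _ | _ | _
  · rw [List.getElem?_eq_none_iff] at hnext
    rw [ups, List.take_of_length_le hnext] at hups
    omega
  · obtain ⟨k', hk'⟩ := exists_isMatch_of_down hP hnext
    have hupk' := hk'.getElem?_left
    have hk'k := hm.lt_of_isMatch_succ hk'
    have h1' : 1 ≤ ups P (k' + 1) := by rw [ups_succ_of_getElem?_eq_true hupk']; omega
    have h2' := ups_le_count P (k' + 1)
    have hpos := upPos_ups_succ hupk'
    have hi'i : ups P (k' + 1) < i := by
      have := ups_mono P (show k' + 1 ≤ upPos P i from hk'k)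
      have := ups_succ_of_getElem?_eq_true (getElem?_upPos h1 h2)
      have := ups_upPos_succ h1 h2
      omega
    have he : upsBeforeMatch P (ups P (k' + 1)) = upsBeforeMatch P i := by
      rw [upsBeforeMatch, hpos, hk'.matchIdx_eq, hups]
    have hnest := upsBeforeMatch_le_of_lt_of_le hQ h1' hi'i
      (by have := le_upsBeforeMatch hP h1 h2; have := hle _ h1' h2'; omega)
    have := hmax _ h1' h2' (by omega)
    rw [hpos, hk'.matchIdx_eq] at this
    omega
  · rfl

/-- `m' - upPos P i` is the distance of the `i`-th up step once the down step closing it is moved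
past the factor `[m + 1, m']` opened by the next letter. -/
lemma sub_upPos_le_distFn (hP : IsDyck P) (hQ : IsDyck Q) (hc : P.count true = Q.count true)
    (hle : ∀ t, 1 ≤ t → t ≤ P.count true → upsBeforeMatch P t ≤ upsBeforeMatch Q t)
    (h1 : 1 ≤ i) (h2 : i ≤ P.count true) (hlt : upsBeforeMatch P i < upsBeforeMatch Q i)
    (hm' : IsMatch P (matchIdx P (upPos P i) + 1) m') : m' - upPos P i ≤ distFn Q i := by
  have hm := isMatch_upPos hP h1 h2
  have hnext := hm'.getElem?_left
  have hj : ups P (matchIdx P (upPos P i) + 1 + 1) = upsBeforeMatch P i + 1 := by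
    rw [ups_succ_of_getElem?_eq_true hnext,
      ups_succ_of_getElem?_ne_true (by rw [hm.getElem?_right]; simp), upsBeforeMatch]
  have hej : upsBeforeMatch P (upsBeforeMatch P i + 1) = ups P m' := by
    rw [upsBeforeMatch, ← hj, upPos_ups_succ hnext, hm'.matchIdx_eq]
  have hQc := upsBeforeMatch_le_count Q i
  have hnest := upsBeforeMatch_le_of_lt_of_le hQ h1
    (show i < upsBeforeMatch P i + 1 by have := le_upsBeforeMatch hP h1 h2; omega)
    (show upsBeforeMatch P i + 1 ≤ upsBeforeMatch Q i by omega)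
  have hj_le := hle _ (by omega) (show upsBeforeMatch P i + 1 ≤ P.count true by omega)
  have hdist : m' - upPos P i = 2 * (ups P m' - i) + 1 := by
    have := sub_eq_two_mul_ups_sub (w := P) (k := upPos P i) (m := m')
      (by have := hm.lt; have := hm'.lt; omega) hm'.lt_length.le
      (by rw [hm'.height_right, hm.height_succ, getElem?_eq_true_iff.mp hm.getElem?_left])
    rwa [ups_upPos_succ h1 h2] at this
  rw [distFn_eq hQ h1 (hc ▸ h2), hdist]
  omega

lemma exists_tamariStep_distFn_le (hP : IsDyck P) (hQ : IsDyck Q)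
    (hc : P.count true = Q.count true)
    (hle : ∀ i, 1 ≤ i → i ≤ P.count true → distFn P i ≤ distFn Q i)
    (hne : ∃ i, 1 ≤ i ∧ i ≤ P.count true ∧ distFn P i < distFn Q i) :
    ∃ P', TamariStep P P' ∧
      ∀ i, 1 ≤ i → i ≤ P.count true → distFn P' i ≤ distFn Q i := by
  have hle_iff : ∀ t, 1 ≤ t → t ≤ P.count true →
      (distFn P t ≤ distFn Q t ↔ upsBeforeMatch P t ≤ upsBeforeMatch Q t) :=
    fun t h1 h2 => distFn_le_distFn_iff hP hQ h1 h2 (hc ▸ h2)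
  have hlt_iff : ∀ t, 1 ≤ t → t ≤ P.count true →
      (distFn P t < distFn Q t ↔ upsBeforeMatch P t < upsBeforeMatch Q t) := fun t h1 h2 => by
    simpa only [not_le] using (distFn_le_distFn_iff hQ hP h1 (hc ▸ h2) h2).not
  obtain ⟨i, hi, hmax⟩ := Finset.exists_max_image
    ((Finset.Icc 1 (P.count true)).filter fun t => distFn P t < distFn Q t)
    (fun t => matchIdx P (upPos P t))
    (by obtain ⟨i, h1, h2, h⟩ := hne; exact ⟨i, by simp [h1, h2, h]⟩)
  simp only [Finset.mem_filter, Finset.mem_Icc, and_imp] at hi hmax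
  obtain ⟨⟨h1, h2⟩, hlt⟩ := hi
  have hle' := fun t h1 h2 => (hle_iff t h1 h2).mp (hle t h1 h2)
  have hnext := getElem?_matchIdx_add_one hP hQ hc hle' h1 h2 ((hlt_iff i h1 h2).mp hlt)
    fun t h1 h2 h => hmax t h1 h2 ((hlt_iff t h1 h2).mpr h)
  have hm := isMatch_upPos hP h1 h2
  have hm' := isMatch_matchIdx hP hnext
  have hbound := sub_upPos_le_distFn hP hQ hc hle' h1 h2 ((hlt_iff i h1 h2).mp hlt) hm'
  have hmm' := hm'.lt
  obtain ⟨A, B, C, rfl, hA, hB, hBd⟩ := exists_eq_append_false_cons hm.getElem?_right hm'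
  refine ⟨A ++ (B ++ false :: C), ⟨A, B, C, hBd, ?_, rfl, rfl⟩, fun t h1' h2' => ?_⟩
  · exact List.length_pos_iff.mp (by omega)
  rw [distFn_rotate hBd hP h1' h2']
  split_ifs with ht
  · have hti : t = i := by
      have hmt := isMatch_upPos hP h1' h2'
      rw [ht, hA] at hmt
      rw [← ups_upPos_succ h1' h2', hmt.left_unique hm, ups_upPos_succ h1 h2]
    subst hti
    have := hm.lt
    rw [distFn]
    omega
  · simpa using hle t h1' h2'

theorem tamariLe_of_distFn_le (hP : IsDyck P) (hQ : IsDyck Q) (hc : P.count true = Q.count true)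
    (hle : ∀ i, 1 ≤ i → i ≤ P.count true → distFn P i ≤ distFn Q i) : TamariLe P Q := by
  induction hN : ∑ i ∈ Finset.Icc 1 (Q.count true), distFn Q i -
      ∑ i ∈ Finset.Icc 1 (Q.count true), distFn P i using Nat.strong_induction_on
      generalizing P with
  | _ N ih =>
  by_cases hne : ∃ i, 1 ≤ i ∧ i ≤ P.count true ∧ distFn P i < distFn Q i
  · obtain ⟨P', hstep, hle'⟩ := exists_tamariStep_distFn_le hP hQ hc hle hne
    have hc' := hstep.count_eq
    have hlt := hstep.sum_distFn_lt hP
    have hsum : ∑ i ∈ Finset.Icc 1 (Q.count true), distFn P' i ≤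
        ∑ i ∈ Finset.Icc 1 (Q.count true), distFn Q i :=
      Finset.sum_le_sum fun i hi =>
        hle' i (Finset.mem_Icc.mp hi).1 (hc ▸ (Finset.mem_Icc.mp hi).2)
    rw [hc] at hlt
    exact .head hstep (ih _ (by omega) (hstep.isDyck hP) (by omega)
      (fun i h1 h2 => hle' i h1 (by omega)) rfl)
  · simp only [not_exists, not_and, not_lt] at hne
    rw [eq_of_distFn_eq hP hQ hc fun i h1 h2 => le_antisymm (hle i h1 h2) (hne i h1 h2)]
    exact .refl

end Backward

end Tamari

/-- `P ≤ Q` in the Tamari lattice iff `D_P(i) ≤ D_Q(i)` for all `1 ≤ i ≤ n`. -/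
theorem tamari_le_iff_dist_le (n : ℕ) (P Q : List Bool)
    (hP : IsDyck P) (hQ : IsDyck Q)
    (hPn : P.count true = n) (hQn : Q.count true = n) :
    TamariLe P Q ↔ ∀ i, 1 ≤ i → i ≤ n → distFn P i ≤ distFn Q i := by
  subst hPn
  exact ⟨fun h _ h1 h2 => h.distFn_le hP h1 h2, Tamari.tamariLe_of_distFn_le hP hQ hQn.symm⟩
end

section
/- Let [P,Q] be a Tamari interval (P ≤ Q in the Tamari lattice on Dyck paths of size n). If the i-th up step of P lies strictly between the j-th up step of P and its matching down step, then the i-th up step of Q lies strictly between the j-th up step of Q and its matching down step. -/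
/-!
Record a Dyck word by its height function `height w k`, the number of up steps minus the number
of down steps among its first `k` letters. The `i`-th up step lies under the arch of the `j`-th
exactly when, after the `j`-th up step, the path stays strictly above the level at which that step
starts until it reaches the `i`-th up step. A rotation `A d B C ↦ A B d C` shifts the letters of
`B` one place to the left and raises the path there by one, leaving it unchanged elsewhere, so this
property survives; the one case where it could fail, the `j`-th up step inside `B` and the `i`-th
beyond it, cannot occur, because `B` is a Dyck word and so closes the arch of the `j`-th up step
inside `B`. Induction along the chain of rotations gives the theorem.
-/

namespace DyckPath

def height (w : List Bool) (k : ℕ) : ℤ := ((w.take k).count true : ℤ) - (w.take k).count false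

section Height

variable {w : List Bool} {k : ℕ}

lemma height_succ (w : List Bool) (k : ℕ) :
    height w (k + 1) = height w k + (w[k]?.map fun b => if b then 1 else -1).getD 0 := by
  unfold height
  rw [List.take_add_one]
  cases w[k]? with
  | none => simp
  | some b => cases b <;> grind

lemma height_succ_of_getD_eq_true (h : w.getD k false = true) :
    height w (k + 1) = height w k + 1 := by
  rw [List.getD_eq_getElem?_getD] at h
  rw [height_succ]
  cases hk : w[k]? with
  | none => simp [hk] at h
  | some b => simp_all

lemma height_succ_of_getD_eq_false (h : w.getD k true = false) :
    height w (k + 1) = height w k - 1 := by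
  rw [List.getD_eq_getElem?_getD] at h
  rw [height_succ]
  cases hk : w[k]? with
  | none => simp [hk] at h
  | some b => simp_all [sub_eq_add_neg]

lemma getD_eq_false_of_height_succ_lt (h : height w (k + 1) < height w k) :
    w.getD k true = false ∧ height w (k + 1) = height w k - 1 := by
  rw [height_succ] at h ⊢
  rw [List.getD_eq_getElem?_getD]
  cases hk : w[k]? with
  | none => simp [hk] at h
  | some b => cases b <;> simp_all [sub_eq_add_neg]

lemma height_length_add_append (X Y : List Bool) (r : ℕ) :
    height (X ++ Y) (X.length + r) = height X X.length + height Y r := by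
  simp only [height, List.take_length_add_append, List.take_length, List.count_append]
  push_cast
  ring

lemma height_drop_take (w : List Bool) (s t k : ℕ) :
    height ((w.drop s).take t) k = height w (s + min k t) - height w s := by
  simp only [height, List.take_take, List.take_add, List.count_append]
  push_cast
  ring

lemma height_of_length_le (hk : w.length ≤ k) :
    height w k = (w.count true : ℤ) - w.count false := by
  rw [height, List.take_of_length_le hk]

lemma isDyck_iff {N : ℕ} (hN : w.length ≤ N) :
    IsDyck w ↔ (∀ k, 0 ≤ height w k) ∧ height w N = 0 := by
  rw [height_of_length_le hN]
  simp only [IsDyck, height, sub_nonneg, sub_eq_zero, Nat.cast_le, Nat.cast_inj]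
  exact and_comm

lemma isDyck_drop_take_iff {s m : ℕ} (hsm : s ≤ m) :
    IsDyck ((w.drop s).take (m - s)) ↔
      (∀ k, s ≤ k → k ≤ m → height w s ≤ height w k) ∧ height w m = height w s := by
  rw [isDyck_iff (List.length_take_le _ _)]
  simp only [height_drop_take, sub_nonneg, min_self, sub_eq_zero, Nat.add_sub_cancel' hsm]
  constructor
  · rintro ⟨h1, h2⟩
    refine ⟨fun k hk1 hk2 => ?_, h2⟩
    simpa [Nat.add_sub_cancel' hk1, min_eq_left (Nat.sub_le_sub_right hk2 s)] using h1 (k - s)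
  · rintro ⟨h1, h2⟩
    exact ⟨fun k => h1 _ (by omega) (by omega), h2⟩

lemma lt_length_of_getD_eq_true (h : w.getD k false = true) : k < w.length := by
  by_contra hk
  rw [List.getD_eq_default _ _ (by omega)] at h
  exact Bool.false_ne_true h

end Height

def StaysAbove (w : List Bool) (p q : ℕ) : Prop := ∀ k, p < k → k ≤ q → height w p < height w k

def matchSet (w : List Bool) (p : ℕ) : Set ℕ :=
  {m | p < m ∧ w.getD m true = false ∧ IsDyck ((w.drop (p + 1)).take (m - (p + 1)))}

section Matching

variable {w : List Bool} {p m : ℕ}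

lemma exists_first_return {K : ℕ} (hpK : p < K) (hK : height w K ≤ height w p) :
    ∃ m, p ≤ m ∧ m < K ∧ height w (m + 1) ≤ height w p ∧ StaysAbove w p m := by
  classical
  have hex : ∃ k, p < k ∧ height w k ≤ height w p := ⟨K, hpK, hK⟩
  have hfind := Nat.find_spec hex
  have hK' := Nat.find_min' hex ⟨hpK, hK⟩
  refine ⟨Nat.find hex - 1, by omega, by omega, by rw [Nat.sub_add_cancel (by omega)]; exact hfind.2,
    fun k hpk hkm => ?_⟩
  by_contra hle
  exact Nat.find_min hex (by omega : k < Nat.find hex) ⟨hpk, not_lt.mp hle⟩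

lemma mem_matchSet_of_first_return (hp : w.getD p false = true)
    (hm : height w (m + 1) ≤ height w p) (hpm : p ≤ m) (habove : StaysAbove w p m) :
    m ∈ matchSet w p := by
  have hup := height_succ_of_getD_eq_true hp
  have hpm' : p < m := by
    rcases hpm.lt_or_eq with h | rfl
    · exact h
    · linarith
  have hdown := getD_eq_false_of_height_succ_lt (lt_of_le_of_lt hm (habove m hpm' le_rfl))
  refine ⟨hpm', hdown.1, (isDyck_drop_take_iff hpm').mpr ⟨fun k hk1 hk2 => ?_, ?_⟩⟩
  · linarith [habove k (by omega) hk2]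
  · linarith [habove m hpm' le_rfl]

lemma height_succ_eq_of_mem_matchSet (hp : w.getD p false = true) (hm : m ∈ matchSet w p) :
    height w (m + 1) = height w p := by
  obtain ⟨hpm, hdown, hdyck⟩ := hm
  rw [height_succ_of_getD_eq_false hdown, ((isDyck_drop_take_iff hpm).mp hdyck).2,
    height_succ_of_getD_eq_true hp]
  ring

lemma lt_matchIdx_iff {q : ℕ} (hw : IsDyck w) (hp : w.getD p false = true)
    (hq : w.getD q false = true) : q < matchIdx w p ↔ StaysAbove w p q := by
  change q < sInf (matchSet w p) ↔ _
  constructor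
  · intro hlt
    by_contra hnot
    simp only [StaysAbove, not_forall, not_lt] at hnot
    obtain ⟨k, hpk, hkq, hk⟩ := hnot
    obtain ⟨m, hpm, hmk, hm, habove⟩ := exists_first_return hpk hk
    have := Nat.sInf_le (mem_matchSet_of_first_return hp hm hpm habove)
    omega
  · intro habove
    have hdyck := (isDyck_iff le_rfl).mp hw
    have hend : height w w.length ≤ height w p := hdyck.2 ▸ hdyck.1 p
    obtain ⟨m, hpm, -, hm, habove'⟩ := exists_first_return (lt_length_of_getD_eq_true hp) hend
    have hmem := Nat.sInf_mem ⟨m, mem_matchSet_of_first_return hp hm hpm habove'⟩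
    by_contra hle
    have hne : sInf (matchSet w p) ≠ q := by
      intro h
      have hdown := hmem.2.1
      have hql := lt_length_of_getD_eq_true hq
      rw [h, List.getD_eq_getElem _ _ hql] at hdown
      rw [List.getD_eq_getElem _ _ hql] at hq
      exact Bool.false_ne_true (hdown.symm.trans hq)
    have := habove (sInf (matchSet w p) + 1) (by have := hmem.1; omega) (by omega)
    rw [height_succ_eq_of_mem_matchSet hp hmem] at this
    exact lt_irrefl _ this

end Matching

section UpPos

variable {w : List Bool}

lemma getD_eq_true_iff_count_take_succ (x : ℕ) :
    w.getD x false = true ↔ (w.take (x + 1)).count true = (w.take x).count true + 1 := by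
  rw [List.getD_eq_getElem?_getD, List.take_add_one, List.count_append]
  cases w[x]? with
  | none => simp
  | some b => cases b <;> simp

lemma count_take_succ_le (x : ℕ) :
    (w.take (x + 1)).count true ≤ (w.take x).count true + 1 := by
  rw [List.take_add_one, List.count_append]
  cases w[x]? with
  | none => simp
  | some b => cases b <;> simp

lemma count_take_mono {k k' : ℕ} (h : k ≤ k') : (w.take k).count true ≤ (w.take k').count true :=
  (List.take_prefix_take_left h).count_le true

lemma upPos_eq {p i : ℕ} (h1 : (w.take p).count true + 1 = i)
    (h2 : (w.take (p + 1)).count true = i) : upPos w i = p := by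
  have hset : {j | w.getD j false = true ∧ (w.take (j + 1)).count true = i} = {p} := by
    refine Set.eq_singleton_iff_unique_mem.mpr ⟨⟨?_, h2⟩, fun j ⟨hj1, hj2⟩ => ?_⟩
    · rw [getD_eq_true_iff_count_take_succ]
      omega
    · rw [getD_eq_true_iff_count_take_succ] at hj1
      rcases lt_trichotomy j p with h | h | h
      · have := count_take_mono (w := w) (show j + 1 ≤ p by omega)
        omega
      · exact h
      · have := count_take_mono (w := w) (show p + 1 ≤ j by omega)
        omega
  rw [upPos, hset, csInf_singleton]

lemma upPos_spec {i : ℕ} (hi1 : 1 ≤ i) (hi : i ≤ w.count true) :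
    (w.take (upPos w i)).count true + 1 = i ∧ (w.take (upPos w i + 1)).count true = i := by
  classical
  have hex : ∃ x, i ≤ (w.take (x + 1)).count true :=
    ⟨w.length, by rwa [List.take_of_length_le (by omega)]⟩
  obtain ⟨x, hx, hmin⟩ : ∃ x, i ≤ (w.take (x + 1)).count true ∧
      ∀ y < x, ¬ i ≤ (w.take (y + 1)).count true :=
    ⟨Nat.find hex, Nat.find_spec hex, fun _ => Nat.find_min hex⟩
  have hbefore : (w.take x).count true < i := by
    rcases Nat.eq_zero_or_pos x with rfl | hpos
    · rw [List.take_zero, List.count_nil]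
      omega
    · have := hmin (x - 1) (by omega)
      rwa [Nat.sub_add_cancel hpos, not_le] at this
  have := count_take_succ_le (w := w) x
  rw [upPos_eq (p := x) (by omega) (by omega)]
  omega

lemma getD_upPos {i : ℕ} (hi1 : 1 ≤ i) (hi : i ≤ w.count true) :
    w.getD (upPos w i) false = true := by
  rw [getD_eq_true_iff_count_take_succ]
  have := upPos_spec hi1 hi
  omega

end UpPos

/-- Where the letter at position `x` of `A ++ false :: (B ++ C)` sits in `A ++ (B ++ false :: C)`,
for `a = A.length`, `b = B.length`, and `x ≠ a`. -/
def rotatePos (a b x : ℕ) : ℕ := if x < a then x else if x ≤ a + b then x - 1 else x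

lemma rotatePos_lt_rotatePos {a b p q : ℕ} (hpa : p ≠ a) (hqa : q ≠ a) (hpq : p < q) :
    rotatePos a b p < rotatePos a b q := by
  unfold rotatePos
  split_ifs <;> omega

section Rotation

variable (A B C : List Bool) {k : ℕ}

lemma take_rotate_of_le (hk : k ≤ A.length) :
    (A ++ (B ++ false :: C)).take k = (A ++ false :: (B ++ C)).take k := by
  rw [List.take_append_of_le_length hk, List.take_append_of_le_length hk]

lemma take_rotate_perm_of_mem_Icc (h1 : A.length ≤ k) (h2 : k ≤ A.length + B.length) :
    ((A ++ (B ++ false :: C)).take k ++ [false]).Perm ((A ++ false :: (B ++ C)).take (k + 1)) := by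
  obtain ⟨r, rfl⟩ := Nat.exists_eq_add_of_le h1
  rw [List.take_length_add_append, add_assoc, List.take_length_add_append, List.take_succ_cons,
    List.take_append_of_le_length (by omega), List.take_append_of_le_length (by omega),
    List.append_assoc]
  exact (List.perm_append_singleton _ _).append_left A

lemma take_rotate_perm_of_lt (h : A.length + B.length < k) :
    ((A ++ (B ++ false :: C)).take k).Perm ((A ++ false :: (B ++ C)).take k) := by
  obtain ⟨r, rfl⟩ : ∃ r, k = A.length + (B.length + r + 1) :=
    ⟨k - A.length - B.length - 1, by omega⟩
  rw [List.take_length_add_append, List.take_length_add_append, List.take_succ_cons, add_assoc,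
    List.take_length_add_append, List.take_succ_cons, List.take_length_add_append]
  exact List.perm_middle.append_left A

lemma height_rotate_of_le (hk : k ≤ A.length) :
    height (A ++ (B ++ false :: C)) k = height (A ++ false :: (B ++ C)) k := by
  rw [height, take_rotate_of_le A B C hk, height]

lemma height_rotate_of_mem_Icc (h1 : A.length ≤ k) (h2 : k ≤ A.length + B.length) :
    height (A ++ (B ++ false :: C)) k = height (A ++ false :: (B ++ C)) (k + 1) + 1 := by
  simp only [height, ← (take_rotate_perm_of_mem_Icc A B C h1 h2).count_eq, List.count_append]
  grind

lemma height_rotate_of_lt (h : A.length + B.length < k) :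
    height (A ++ (B ++ false :: C)) k = height (A ++ false :: (B ++ C)) k := by
  have hperm := take_rotate_perm_of_lt A B C h
  rw [height, height, hperm.count_eq, hperm.count_eq]

lemma height_rotate_length_add {r : ℕ} (hr : r ≤ B.length) :
    height (A ++ (B ++ false :: C)) (A.length + r) = height A A.length + height B r := by
  rw [height_length_add_append]
  simp only [height, List.take_append_of_le_length hr]

variable {A B C}

lemma upPos_ne_length {i : ℕ} (hi1 : 1 ≤ i) (hi : i ≤ (A ++ false :: (B ++ C)).count true) :
    upPos (A ++ false :: (B ++ C)) i ≠ A.length := fun h => by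
  simpa [h] using getD_upPos hi1 hi

lemma upPos_rotate {i : ℕ} (hi1 : 1 ≤ i) (hi : i ≤ (A ++ false :: (B ++ C)).count true) :
    upPos (A ++ (B ++ false :: C)) i =
      rotatePos A.length B.length (upPos (A ++ false :: (B ++ C)) i) := by
  obtain ⟨hx1, hx2⟩ := upPos_spec hi1 hi
  have hxa := upPos_ne_length hi1 hi
  set x := upPos (A ++ false :: (B ++ C)) i
  have hle : ∀ k ≤ A.length, ((A ++ (B ++ false :: C)).take k).count true =
      ((A ++ false :: (B ++ C)).take k).count true := fun k hk => by
    rw [take_rotate_of_le A B C hk]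
  have hmid : ∀ k, A.length ≤ k → k ≤ A.length + B.length →
      ((A ++ (B ++ false :: C)).take k).count true =
        ((A ++ false :: (B ++ C)).take (k + 1)).count true := fun k h1 h2 => by
    simp [← (take_rotate_perm_of_mem_Icc A B C h1 h2).count_eq]
  have hlt : ∀ k, A.length + B.length < k → ((A ++ (B ++ false :: C)).take k).count true =
      ((A ++ false :: (B ++ C)).take k).count true := fun k hk =>
    (take_rotate_perm_of_lt A B C hk).count_eq true
  unfold rotatePos
  split_ifs with h1 h2
  · exact upPos_eq (by rwa [hle x h1.le]) (by rwa [hle (x + 1) h1])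
  · exact upPos_eq (by rwa [hmid (x - 1) (by omega) (by omega), Nat.sub_add_cancel (by omega)])
      (by rwa [Nat.sub_add_cancel (by omega), hmid x (by omega) h2])
  · exact upPos_eq (by rwa [hlt x (by omega)]) (by rwa [hlt (x + 1) (by omega)])

lemma staysAbove_rotate (hB : IsDyck B) {p q : ℕ} (hpa : p ≠ A.length) (hpq : p < q)
    (h : StaysAbove (A ++ false :: (B ++ C)) p q) :
    StaysAbove (A ++ (B ++ false :: C)) (rotatePos A.length B.length p)
      (rotatePos A.length B.length q) := by
  intro k hk1 hk2
  unfold rotatePos at hk1 hk2 ⊢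
  rcases lt_or_gt_of_ne hpa with hpa | hpa
  · rw [if_pos hpa] at hk1 ⊢
    rw [height_rotate_of_le A B C hpa.le]
    rcases le_or_gt k A.length with hka | hka
    · rw [height_rotate_of_le A B C hka]
      exact h k hk1 (by split_ifs at hk2 <;> omega)
    rcases le_or_gt k (A.length + B.length) with hkb | hkb
    · rw [height_rotate_of_mem_Icc A B C hka.le hkb]
      linarith [h (k + 1) (by omega) (by split_ifs at hk2 <;> omega)]
    · rw [height_rotate_of_lt A B C hkb]
      exact h k hk1 (by split_ifs at hk2 <;> omega)
  rcases le_or_gt p (A.length + B.length) with hpb | hpb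
  · rw [if_neg (by omega), if_pos hpb] at hk1 ⊢
    rw [height_rotate_of_mem_Icc A B C (by omega) (by omega), Nat.sub_add_cancel (by omega)]
    rcases le_or_gt q (A.length + B.length) with hqb | hqb
    · rw [if_neg (by omega), if_pos hqb] at hk2
      rw [height_rotate_of_mem_Icc A B C (by omega) (by omega)]
      linarith [h (k + 1) (by omega) (by omega)]
    · exfalso
      -- `q` lies beyond `B`, but the arch of `p` closes inside the Dyck word `B`.
      have hp := height_rotate_length_add A B C (r := p - 1 - A.length) (by omega)
      have hend := height_rotate_length_add A B C (r := B.length) le_rfl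
      rw [show A.length + (p - 1 - A.length) = p - 1 by omega,
        height_rotate_of_mem_Icc A B C (by omega) (by omega), Nat.sub_add_cancel (by omega)] at hp
      rw [height_rotate_of_mem_Icc A B C (by omega) le_rfl] at hend
      have hB' := (isDyck_iff le_rfl).mp hB
      linarith [hB'.1 (p - 1 - A.length), h (A.length + B.length + 1) (by omega) (by omega)]
  · rw [if_neg (by omega), if_neg (by omega)] at hk1 ⊢
    rw [if_neg (by omega), if_neg (by omega)] at hk2
    rw [height_rotate_of_lt A B C hpb, height_rotate_of_lt A B C (by omega)]
    exact h k hk1 hk2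

end Rotation

def IsNestedIn (w : List Bool) (i j : ℕ) : Prop :=
  upPos w j < upPos w i ∧ upPos w i < matchIdx w (upPos w j)

end DyckPath

namespace TamariStep

open DyckPath

variable {P Q : List Bool}

lemma count_true_eq (h : TamariStep P Q) : Q.count true = P.count true := by
  obtain ⟨A, B, C, -, -, rfl, rfl⟩ := h
  exact (List.perm_middle.append_left A).count_eq true

lemma isDyck_s5 (h : TamariStep P Q) (hP : IsDyck P) : IsDyck Q := by
  obtain ⟨A, B, C, -, -, rfl, rfl⟩ := h
  have hlen : (A ++ (B ++ false :: C)).length = (A ++ false :: (B ++ C)).length := by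
    simp only [List.length_append, List.length_cons]
    omega
  rw [isDyck_iff le_rfl] at hP ⊢
  refine ⟨fun k => ?_, ?_⟩
  · rcases le_or_gt k A.length with h1 | h1
    · rw [height_rotate_of_le A B C h1]
      exact hP.1 k
    rcases le_or_gt k (A.length + B.length) with h2 | h2
    · rw [height_rotate_of_mem_Icc A B C h1.le h2]
      linarith [hP.1 (k + 1)]
    · rw [height_rotate_of_lt A B C h2]
      exact hP.1 k
  · rw [height_rotate_of_lt A B C (by simp), hlen]
    exact hP.2

lemma isNestedIn (h : TamariStep P Q) (hP : IsDyck P) {i j : ℕ} (hi1 : 1 ≤ i)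
    (hi : i ≤ P.count true) (hj1 : 1 ≤ j) (hj : j ≤ P.count true) (hnest : IsNestedIn P i j) :
    IsNestedIn Q i j := by
  have hQ := h.isDyck_s5 hP
  have hQi := getD_upPos hi1 (h.count_true_eq ▸ hi)
  have hQj := getD_upPos hj1 (h.count_true_eq ▸ hj)
  obtain ⟨A, B, C, hB, -, rfl, rfl⟩ := h
  rw [upPos_rotate hi1 hi] at hQi
  rw [upPos_rotate hj1 hj] at hQj
  have habove := (lt_matchIdx_iff hP (getD_upPos hj1 hj) (getD_upPos hi1 hi)).mp hnest.2
  have hja := upPos_ne_length hj1 hj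
  rw [IsNestedIn, upPos_rotate hi1 hi, upPos_rotate hj1 hj, lt_matchIdx_iff hQ hQj hQi]
  exact ⟨rotatePos_lt_rotatePos hja (upPos_ne_length hi1 hi) hnest.1,
    staysAbove_rotate hB hja hnest.1 habove⟩

end TamariStep

theorem tamari_interval_nesting_general (n : ℕ) (P Q : List Bool)
    (hP : IsDyck P)
    (hPn : P.count true = n)
    (hle : TamariLe P Q) (i j : ℕ)
    (hi1 : 1 ≤ i) (hin : i ≤ n) (hj1 : 1 ≤ j) (hjn : j ≤ n)
    (hbtw : upPos P j < upPos P i ∧ upPos P i < matchIdx P (upPos P j)) :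
    upPos Q j < upPos Q i ∧ upPos Q i < matchIdx Q (upPos Q j) := by
  suffices IsDyck Q ∧ Q.count true = n ∧ DyckPath.IsNestedIn Q i j from this.2.2
  induction hle with
  | refl => exact ⟨hP, hPn, hbtw⟩
  | tail _ hstep ih =>
    obtain ⟨hR, hRn, hnest⟩ := ih
    exact ⟨hstep.isDyck_s5 hR, hstep.count_true_eq.trans hRn,
      hstep.isNestedIn hR hi1 (hRn ▸ hin) hj1 (hRn ▸ hjn) hnest⟩

/-- For a Tamari interval `[P, Q]`: if the `i`-th up step of `P` lies strictly between the
`j`-th up step of `P` and its matching down step, the same holds in `Q`. -/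
theorem tamari_interval_nesting (n : ℕ) (P Q : List Bool)
    (hP : IsDyck P) (hQ : IsDyck Q)
    (hPn : P.count true = n) (hQn : Q.count true = n)
    (hle : TamariLe P Q) (i j : ℕ)
    (hi1 : 1 ≤ i) (hin : i ≤ n) (hj1 : 1 ≤ j) (hjn : j ≤ n)
    (hbtw : upPos P j < upPos P i ∧ upPos P i < matchIdx P (upPos P j)) :
    upPos Q j < upPos Q i ∧ upPos Q i < matchIdx Q (upPos Q j) :=
  tamari_interval_nesting_general n P Q hP hPn hle i j hi1 hin hj1 hjn hbtw
end

section
/- Let I1 = [P1ℓ·P1r, Q1] be a synchronized interval with a distinguished decomposition of the lower path into Dyck paths P1ℓ, P1r (P1ℓ nonempty unless both are empty), and let I2 = [P2, Q2] be a synchronized interval. Then P = u·P1ℓ·d·P1r·P2 and Q = u·Q1·d·Q2 form a synchronized interval [P,Q]. -/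
/-- The type of a Dyck word `w` of size `n`: the word of length `n - 1` over `{N, E}`
(encoded with `true = E`, `false = N`) whose `k`-th letter is `E` iff the letter following
the `k`-th up step of `w` is an up step. -/
noncomputable def typeWord (w : List Bool) : List Bool :=
  (List.range (w.count true - 1)).map (fun k => w.getD (upPos w (k + 1) + 1) false)

/-- A synchronized interval: a pair of Dyck words of the same size, comparable in the
Tamari order, and with the same type. -/
def Sync (P Q : List Bool) : Prop :=
  IsDyck P ∧ IsDyck Q ∧ P.length = Q.length ∧ TamariLe P Q ∧ typeWord P = typeWord Q

/-!
The Dyck and size conditions are immediate, and the Tamari relation is the chain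
`u P1ℓ d P1r P2 ≤ u P1ℓ d P1r Q2 ≤ u P1ℓ P1r d Q2 ≤ u Q1 d Q2`: the outer steps apply the two
given intervals in context, the middle one rotates the down step past the Dyck word `P1r`.

For the types, record the letter following every up step (`followers`); the type is this list
minus its last letter, which is always a down step. Since a nonempty Dyck word ends with a down
step, the list is additive over the factors of both composed words, so it agrees on them except
possibly in its first letter, the one after the initial `u`. That letter is `u` exactly when
`P1ℓ` (resp. `Q1`) is nonempty, and pointedness makes `P1ℓ` empty exactly when `Q1` is.
-/

open List

namespace IsDyck

variable {a b : List Bool}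

theorem two_mul_count_true (ha : IsDyck a) : 2 * a.count true = a.length := by
  have := count_true_add_count_false a
  have := ha.1
  omega

theorem append (ha : IsDyck a) (hb : IsDyck b) : IsDyck (a ++ b) := by
  refine ⟨by simp [count_append, ha.1, hb.1], fun k => ?_⟩
  rw [take_append, count_append, count_append]
  exact Nat.add_le_add (ha.2 k) (hb.2 _)

theorem up_append_down (ha : IsDyck a) : IsDyck (true :: (a ++ [false])) := by
  refine ⟨by simp [count_append, ha.1], fun k => ?_⟩
  cases k with
  | zero => simp
  | succ k =>
    have hdown : (take (k - a.length) [false]).count false ≤ 1 :=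
      ((take_sublist _ _).count_le false).trans (by simp)
    have := ha.2 k
    simp [take_append, count_append] at hdown ⊢
    omega

theorem headD_eq_true (ha : IsDyck a) (hne : a ≠ []) : a.headD false = true := by
  obtain ⟨x, t, rfl⟩ := exists_cons_of_ne_nil hne
  have := ha.2 1
  cases x <;> simp_all

theorem eq_dropLast_append_false (ha : IsDyck a) (hne : a ≠ []) :
    a = a.dropLast ++ [false] := by
  obtain ⟨t, x, rfl⟩ := (eq_nil_or_concat a).resolve_left hne
  cases x
  · simp
  · have hcount := ha.1
    have hprefix := ha.2 t.length
    simp [count_append] at hcount hprefix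
    omega

end IsDyck

theorem TamariLe.append_append {P Q : List Bool} (X Y : List Bool) (h : TamariLe P Q) :
    TamariLe (X ++ P ++ Y) (X ++ Q ++ Y) :=
  Relation.ReflTransGen.lift (fun w => X ++ w ++ Y)
    (fun _ _ ⟨A, B, C, hB, hBne, hP, hQ⟩ =>
      ⟨X ++ A, B, C ++ Y, hB, hBne, by simp [hP], by simp [hQ]⟩) _ _ h

theorem tamariLe_up_append_down_append {a b Q c R : List Bool} (hb : IsDyck b)
    (h₁ : TamariLe (a ++ b) Q) (h₂ : TamariLe c R) :
    TamariLe (true :: (a ++ false :: (b ++ c))) (true :: (Q ++ false :: R)) := by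
  have hright :
      TamariLe (true :: (a ++ false :: (b ++ c))) (true :: (a ++ false :: (b ++ R))) := by
    simpa using h₂.append_append (true :: (a ++ false :: b)) []
  have hrotate :
      TamariLe (true :: (a ++ false :: (b ++ R))) (true :: (a ++ (b ++ false :: R))) := by
    rcases eq_or_ne b [] with rfl | hne
    · exact Relation.ReflTransGen.refl
    · exact .single ⟨true :: a, b, R, hb, hne, by simp, by simp⟩
  have hleft : TamariLe (true :: (a ++ (b ++ false :: R))) (true :: (Q ++ false :: R)) := by
    simpa using h₁.append_append [true] (false :: R)
  exact (hright.trans hrotate).trans hleft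

/-- The letter following each up step of `w`, with a final up step counted as followed by a
down step. It is the type of `w` without the truncation to `n - 1` letters, and unlike the type
it splits over a concatenation after a down step. -/
def followers : List Bool → List Bool
  | [] => []
  | true :: t => t.headD false :: followers t
  | false :: t => followers t

@[simp] theorem followers_nil : followers [] = [] := rfl
@[simp] theorem followers_cons_true (t : List Bool) :
    followers (true :: t) = t.headD false :: followers t := rfl
@[simp] theorem followers_cons_false (t : List Bool) :
    followers (false :: t) = followers t := rfl

@[simp] theorem length_followers (w : List Bool) : (followers w).length = w.count true := by
  induction w with
  | nil => rfl
  | cons x t ih => cases x <;> simp [ih]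

theorem followers_append_false_cons (a r : List Bool) :
    followers (a ++ false :: r) = followers a ++ followers r := by
  induction a with
  | nil => rfl
  | cons x t ih => cases x <;> cases t <;> simp_all

theorem followers_up_append_down (a r : List Bool) :
    followers (true :: (a ++ false :: r)) = a.headD false :: (followers a ++ followers r) := by
  rw [followers_cons_true, followers_append_false_cons]
  cases a <;> rfl

theorem IsDyck.followers_append {a : List Bool} (ha : IsDyck a) (b : List Bool) :
    followers (a ++ b) = followers a ++ followers b := by
  rcases eq_or_ne a [] with rfl | hne
  · rfl
  · rw [ha.eq_dropLast_append_false hne, append_assoc, singleton_append,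
      followers_append_false_cons, followers_append_false_cons, followers_nil, append_nil]

theorem count_take_succ_of_getD_eq_true {w : List Bool} {j : ℕ} (h : w.getD j false = true) :
    (w.take (j + 1)).count true = (w.take j).count true + 1 := by
  rw [getD_eq_getElem?_getD] at h
  obtain ⟨x, hx, rfl⟩ : ∃ x, w[j]? = some x ∧ x = true := by
    cases hj : w[j]? <;> simp_all
  simp [take_add_one, hx]

theorem upPos_eq {w : List Bool} {i j : ℕ} (hj : w.getD j false = true)
    (hcount : (w.take (j + 1)).count true = i) : upPos w i = j := by
  set S := {j | w.getD j false = true ∧ (w.take (j + 1)).count true = i}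
  show sInf S = j
  have hmem : j ∈ S := ⟨hj, hcount⟩
  refine le_antisymm (Nat.sInf_le hmem) (not_lt.1 fun hlt => ?_)
  obtain ⟨-, hcount'⟩ : sInf S ∈ S := Nat.sInf_mem ⟨j, hmem⟩
  have := (take_sublist_take_left (l := w) (by omega : sInf S + 1 ≤ j)).count_le true
  have := count_take_succ_of_getD_eq_true hj
  omega

theorem exists_up_followed_by (w : List Bool) {i : ℕ} (hi : i < (followers w).length) :
    ∃ j, w.getD j false = true ∧ (w.take (j + 1)).count true = i + 1 ∧
      w.getD (j + 1) false = (followers w)[i] := by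
  induction w generalizing i with
  | nil => simp at hi
  | cons x t ih =>
    cases x with
    | false =>
      obtain ⟨j, hj, hcount, hnext⟩ := ih hi
      exact ⟨j + 1, hj, by simpa using hcount, hnext⟩
    | true =>
      cases i with
      | zero => exact ⟨0, rfl, rfl, by cases t <;> rfl⟩
      | succ i =>
        obtain ⟨j, hj, hcount, hnext⟩ := ih (by simpa using hi)
        exact ⟨j + 1, hj, by simpa using hcount, hnext⟩

theorem getElem_followers (w : List Bool) {i : ℕ} (hi : i < (followers w).length) :
    (followers w)[i] = w.getD (upPos w (i + 1) + 1) false := by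
  obtain ⟨j, hj, hcount, hnext⟩ := exists_up_followed_by w hi
  rw [upPos_eq hj hcount, hnext]

theorem typeWord_eq_dropLast_followers (w : List Bool) : typeWord w = (followers w).dropLast := by
  refine ext_getElem (by simp [typeWord]) fun i h₁ h₂ => ?_
  simp [typeWord, getElem_followers]

theorem getLast_followers (w : List Bool) (h : followers w ≠ []) :
    (followers w).getLast h = false := by
  have hlast : (followers w).length - 1 < (followers w).length := by
    have := length_pos_iff.2 h
    omega
  obtain ⟨j, hj, hcount, hnext⟩ := exists_up_followed_by w hlast
  rw [getLast_eq_getElem, ← hnext]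
  by_contra hup
  have := count_take_succ_of_getD_eq_true (eq_true_of_ne_false hup)
  have := (take_sublist (j + 1 + 1) w).count_le true
  have := length_pos_iff.2 h
  rw [length_followers] at hcount this
  omega

theorem followers_eq_of_typeWord_eq {x y : List Bool} (hc : x.count true = y.count true)
    (h : typeWord x = typeWord y) : followers x = followers y := by
  rcases Nat.eq_zero_or_pos (x.count true) with h0 | hpos
  · have hx : (followers x).length = 0 := by simpa using h0
    have hy : (followers y).length = 0 := by simpa [← hc] using h0
    rw [length_eq_zero_iff.1 hx, length_eq_zero_iff.1 hy]
  · have hx : followers x ≠ [] := ne_nil_of_length_pos (by simpa using hpos)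
    have hy : followers y ≠ [] := ne_nil_of_length_pos (by simpa [← hc] using hpos)
    rw [← dropLast_append_getLast hx, ← dropLast_append_getLast hy, getLast_followers,
      getLast_followers, ← typeWord_eq_dropLast_followers, ← typeWord_eq_dropLast_followers, h]

theorem Sync.followers_eq {P Q : List Bool} (h : Sync P Q) : followers P = followers Q := by
  obtain ⟨hP, hQ, hlen, -, htype⟩ := h
  refine followers_eq_of_typeWord_eq ?_ htype
  have := hP.two_mul_count_true
  have := hQ.two_mul_count_true
  omega

/-- Composition of a properly pointed synchronized interval with a synchronized interval
yields a synchronized interval. -/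
theorem sync_compose (P1l P1r Q1 P2 Q2 : List Bool)
    (h1 : IsDyck P1l) (h2 : IsDyck P1r)
    (hpt : P1l = [] → P1r = [])
    (hI1 : Sync (P1l ++ P1r) Q1) (hI2 : Sync P2 Q2) :
    Sync (true :: (P1l ++ false :: (P1r ++ P2))) (true :: (Q1 ++ false :: Q2)) := by
  have hF1 := hI1.followers_eq
  have hF2 := hI2.followers_eq
  obtain ⟨-, hQ1, hlen1, hle1, -⟩ := hI1
  obtain ⟨hP2, hQ2, hlen2, hle2, -⟩ := hI2
  have hhead : P1l.headD false = Q1.headD false := by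
    rw [length_append] at hlen1
    rcases eq_or_ne P1l [] with hl | hl
    · have hQ1nil : Q1 = [] := length_eq_zero_iff.1 (by simp [hl, hpt hl] at hlen1; omega)
      rw [hl, hQ1nil]
    · rw [h1.headD_eq_true hl, hQ1.headD_eq_true (ne_nil_of_length_pos
        (by have := length_pos_iff.2 hl; omega))]
  refine ⟨?_, ?_, ?_, tamariLe_up_append_down_append h2 hle1 hle2, ?_⟩
  · simpa using h1.up_append_down.append (h2.append hP2)
  · simpa using hQ1.up_append_down.append hQ2
  · simp only [length_cons, length_append] at hlen1 ⊢
    omega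
  · rw [typeWord_eq_dropLast_followers, typeWord_eq_dropLast_followers,
      followers_up_append_down, followers_up_append_down, h2.followers_append,
      ← append_assoc, ← h1.followers_append, hF1, hF2, hhead]
end
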